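/- For three conformal points, P₁∧P₂∧P₃ = p₁∧p₂∧p₃ + (1/2)(p₁²p₂∧p₃ + p₂²p₃∧p₁ + p₃²p₁∧p₂)n + (p₂∧p₃ + p₃∧p₁ + p₁∧p₂)n̄ + (1/2)[p₁(p₂²−p₃²) + p₂(p₃²−p₁²) + p₃(p₁²−p₂²)]N. -/

import Mathlib

/-! Write `P = p + ½p² n + n̄`. The trivector product `w3` is trilinear and alternating, so in
the expansion every term with `n` or `n̄` twice vanishes. Euclidean vectors are orthogonal to `n`
and `n̄` and hence anticommute with them; this turns a trivector with one null factor into a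
Euclidean bivector times that factor, and one with both null factors into the Euclidean factor
times `N`. -/

noncomputable section
open scoped RealInnerProductSpace

/-- Euclidean 3-space. -/
abbrev E3 : Type := EuclideanSpace ℝ (Fin 3)

/-- The 5-dimensional space ℝ^{4,1}: Euclidean part plus coefficients of the
null vectors n (infinity) and n̄ (origin). -/
abbrev V5 : Type := E3 × ℝ × ℝ

/-- Symmetric bilinear form of signature (4,1):
`⟪p,q⟫` on the Euclidean part, and `n·n̄ = -1` on the null pair. -/
def B5 : LinearMap.BilinForm ℝ V5 := LinearMap.mk₂ ℝ
  (fun x y => ⟪x.1, y.1⟫ - x.2.1 * y.2.2 - x.2.2 * y.2.1)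
  (fun m₁ m₂ y => by simp only [Prod.fst_add, Prod.snd_add, inner_add_left]; ring)
  (fun c m y => by simp only [Prod.smul_fst, Prod.smul_snd, smul_eq_mul, real_inner_smul_left]; ring)
  (fun m y₁ y₂ => by simp only [Prod.fst_add, Prod.snd_add, inner_add_right]; ring)
  (fun c m y => by simp only [Prod.smul_fst, Prod.smul_snd, smul_eq_mul, real_inner_smul_right]; ring)

/-- The quadratic form of R_{4,1}. -/
def Q5 : QuadraticForm ℝ V5 := B5.toQuadraticMap

/-- The Clifford geometric algebra R_{4,1}. -/
abbrev Cl : Type := CliffordAlgebra Q5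

def ι5 : V5 →ₗ[ℝ] Cl := CliffordAlgebra.ι Q5

/-- Embedding of a Euclidean vector as a grade-1 element. -/
def ev (p : E3) : Cl := ι5 (p, 0, 0)

/-- The null vector n representing infinity. -/
def nInf : Cl := ι5 (0, 1, 0)

/-- The null vector n̄ representing the origin. -/
def nOri : Cl := ι5 (0, 0, 1)

/-- The conformal point P = p + (1/2)p² n + n̄. -/
def cpt (p : E3) : Cl := ι5 (p, ⟪p, p⟫ / 2, 1)

/-- Outer (wedge) product of two vectors (grade-1 elements): antisymmetrized
geometric product. -/
def w2 (a b : Cl) : Cl := (2:ℝ)⁻¹ • (a * b - b * a)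

/-- Outer (wedge) product of three vectors. -/
def w3 (a b c : Cl) : Cl := (6:ℝ)⁻¹ •
  (a*b*c - a*c*b - b*a*c + b*c*a + c*a*b - c*b*a)

/-- Outer (wedge) product of a vector with a bivector. -/
def vwB (v B : Cl) : Cl := (2:ℝ)⁻¹ • (v * B + B * v)

/-- Left contraction of a vector into a bivector. -/
def lcontr (v B : Cl) : Cl := (2:ℝ)⁻¹ • (v * B - B * v)

/-- The Minkowski plane bivector N = n ∧ n̄. -/
def Nb : Cl := w2 nInf nOri

section Wedge

variable (a b c x y : Cl) (r : ℝ)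

lemma w2_swap : w2 a b = -w2 b a := by simp only [w2]; module

lemma w3_add_left (a' : Cl) : w3 (a + a') b c = w3 a b c + w3 a' b c := by
  simp only [w3, add_mul, mul_add]; module
lemma w3_add_middle (b' : Cl) : w3 a (b + b') c = w3 a b c + w3 a b' c := by
  simp only [w3, add_mul, mul_add]; module
lemma w3_add_right (c' : Cl) : w3 a b (c + c') = w3 a b c + w3 a b c' := by
  simp only [w3, add_mul, mul_add]; module
lemma w3_smul_left : w3 (r • a) b c = r • w3 a b c := by
  simp only [w3, smul_mul_assoc, mul_smul_comm]; module
lemma w3_smul_middle : w3 a (r • b) c = r • w3 a b c := by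
  simp only [w3, smul_mul_assoc, mul_smul_comm]; module
lemma w3_smul_right : w3 a b (r • c) = r • w3 a b c := by
  simp only [w3, smul_mul_assoc, mul_smul_comm]; module

lemma w3_self_left : w3 a a c = 0 := by simp only [w3]; module
lemma w3_self_right : w3 a b b = 0 := by simp only [w3]; module
lemma w3_self_outer : w3 a b a = 0 := by simp only [w3]; module

lemma w3_swap_left : w3 a b c = -w3 b a c := by simp only [w3]; module
lemma w3_swap_right : w3 a b c = -w3 a c b := by simp only [w3]; module
lemma w3_rotate : w3 a b c = w3 b c a := by simp only [w3]; module

variable {a b x y}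

lemma w3_eq_w2_mul_of_anticomm (ha : x * a = -(a * x)) (hb : x * b = -(b * x)) :
    w3 a b x = w2 a b * x := by
  have h : a*b*x - a*x*b - b*a*x + b*x*a + x*a*b - x*b*a
      = (a*b - b*a) * x + (a*b - b*a) * x + (a*b - b*a) * x := by
    linear_combination (norm := noncomm_ring) (2*b)*ha + ha*b - (2*a)*hb - hb*a
  rw [w3, h, w2, smul_mul_assoc]
  module

lemma w2_mul_comm_of_anticomm (ha : x * a = -(a * x)) (hb : x * b = -(b * x)) :
    w2 a b * x = x * w2 a b := by
  have h : (a*b - b*a) * x = x * (a*b - b*a) := by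
    linear_combination (norm := noncomm_ring) a*hb + hb*a - b*ha - ha*b
  rw [w2, smul_mul_assoc, mul_smul_comm, h]

lemma w3_eq_mul_w2_of_anticomm (hx : x * a = -(a * x)) (hy : y * a = -(a * y)) :
    w3 a x y = a * w2 x y := by
  have hx' : a * x = -(x * a) := by rw [hx, neg_neg]
  have hy' : a * y = -(y * a) := by rw [hy, neg_neg]
  rw [w3_rotate, w3_eq_w2_mul_of_anticomm hx' hy', w2_mul_comm_of_anticomm hx' hy']

variable {c}

lemma w3_add_smul_add_eq (hxa : x * a = -(a * x)) (hxb : x * b = -(b * x))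
    (hxc : x * c = -(c * x)) (hya : y * a = -(a * y)) (hyb : y * b = -(b * y))
    (hyc : y * c = -(c * y)) (α β γ : ℝ) :
    w3 (a + α • x + y) (b + β • x + y) (c + γ • x + y) =
      w3 a b c + (α • w2 b c + β • w2 c a + γ • w2 a b) * x
      + (w2 b c + w2 c a + w2 a b) * y
      + ((β - γ) • a + (γ - α) • b + (α - β) • c) * w2 x y := by
  simp only [w3_add_left, w3_add_middle, w3_add_right, w3_smul_left, w3_smul_middle,
    w3_smul_right, w3_self_left, w3_self_right, w3_self_outer, smul_zero, add_zero]
  -- put the null factors of each surviving term last, then evaluate it by anticommutation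
  rw [w3_rotate x b c, w3_rotate y b c, w3_swap_right a x c, w3_swap_right a y c,
    w3_eq_w2_mul_of_anticomm hxb hxc, w3_eq_w2_mul_of_anticomm hyb hyc,
    w3_eq_w2_mul_of_anticomm hxa hxc, w3_eq_w2_mul_of_anticomm hya hyc,
    w3_eq_w2_mul_of_anticomm hxa hxb, w3_eq_w2_mul_of_anticomm hya hyb,
    w3_swap_right a y x, w3_swap_left x b y, w3_rotate y b x, ← w3_rotate c x y,
    w3_swap_left y x c, ← w3_rotate c x y,
    w3_eq_mul_w2_of_anticomm hxa hya, w3_eq_mul_w2_of_anticomm hxb hyb,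
    w3_eq_mul_w2_of_anticomm hxc hyc, w2_swap a c]
  simp only [add_mul, sub_mul, smul_mul_assoc, neg_mul, smul_neg, sub_smul]
  module

end Wedge

lemma Q5_isOrtho_null_ev (s t : ℝ) (p : E3) : Q5.IsOrtho (0, s, t) (p, 0, 0) := by
  simp [QuadraticMap.isOrtho_def, Q5, B5]
  ring

lemma nInf_mul_ev (p : E3) : nInf * ev p = -(ev p * nInf) :=
  CliffordAlgebra.ι_mul_ι_comm_of_isOrtho (Q5_isOrtho_null_ev 1 0 p)

lemma nOri_mul_ev (p : E3) : nOri * ev p = -(ev p * nOri) :=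
  CliffordAlgebra.ι_mul_ι_comm_of_isOrtho (Q5_isOrtho_null_ev 0 1 p)

lemma ev_add (p q : E3) : ev (p + q) = ev p + ev q := by
  rw [ev, ev, ev, ← map_add, Prod.mk_add_mk, Prod.mk_add_mk, add_zero]

lemma ev_smul (r : ℝ) (p : E3) : ev (r • p) = r • ev p := by
  rw [ev, ev, ← map_smul, Prod.smul_mk, Prod.smul_mk, smul_zero]

lemma cpt_eq_add (p : E3) : cpt p = ev p + (⟪p, p⟫ / 2) • nInf + nOri := by
  simp only [cpt, ev, nInf, nOri, ← map_smul, ← map_add, Prod.smul_mk, Prod.mk_add_mk]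
  simp

/-- expansion of the circle trivector P₁∧P₂∧P₃. -/
theorem circle_trivector_expansion (p₁ p₂ p₃ : E3) :
    w3 (cpt p₁) (cpt p₂) (cpt p₃) =
      w3 (ev p₁) (ev p₂) (ev p₃)
      + (2:ℝ)⁻¹ • ((⟪p₁, p₁⟫ • w2 (ev p₂) (ev p₃)
          + ⟪p₂, p₂⟫ • w2 (ev p₃) (ev p₁)
          + ⟪p₃, p₃⟫ • w2 (ev p₁) (ev p₂)) * nInf)
      + (w2 (ev p₂) (ev p₃) + w2 (ev p₃) (ev p₁) + w2 (ev p₁) (ev p₂)) * nOri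
      + (2:ℝ)⁻¹ • (ev ((⟪p₂, p₂⟫ - ⟪p₃, p₃⟫) • p₁
          + (⟪p₃, p₃⟫ - ⟪p₁, p₁⟫) • p₂
          + (⟪p₁, p₁⟫ - ⟪p₂, p₂⟫) • p₃) * Nb) := by
  rw [cpt_eq_add, cpt_eq_add, cpt_eq_add, w3_add_smul_add_eq (nInf_mul_ev p₁) (nInf_mul_ev p₂)
    (nInf_mul_ev p₃) (nOri_mul_ev p₁) (nOri_mul_ev p₂) (nOri_mul_ev p₃), Nb]
  simp only [ev_add, ev_smul, add_mul, smul_mul_assoc, smul_add]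
  module
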